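/- arXiv:2107.00071 — 5 statements merged into one kernel-verified Lean document; each statement's English description precedes it below -/
import Mathlib

section
/- For any graph G without isolated vertices on n vertices, the Randić index satisfies R(G) ≤ n/2, with equality if G is regular (every vertex has the same positive degree). -/
open SimpleGraph Finset
open scoped Classical

noncomputable def randic {V : Type*} [Fintype V] (G : SimpleGraph V) : ℝ :=
  ∑ e ∈ G.edgeFinset,
    Sym2.lift ⟨fun u v => 1 / Real.sqrt ((G.degree u : ℝ) * (G.degree v : ℝ)),
      fun u v => by simp [mul_comm]⟩ e

noncomputable def ecc {V : Type*} [Fintype V] (G : SimpleGraph V) (v : V) : ℕ :=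
  univ.sup fun u => G.dist v u

noncomputable def graphRadius {V : Type*} [Fintype V] (G : SimpleGraph V) : ℕ :=
  sInf (Set.range (ecc G))

noncomputable def graphDiam {V : Type*} [Fintype V] (G : SimpleGraph V) : ℕ :=
  univ.sup fun v => ecc G v

/-- A cactus: a connected graph in which no two distinct cycles share an edge. -/
def IsCactus {V : Type*} (G : SimpleGraph V) : Prop :=
  G.Connected ∧ ∀ ⦃u v : V⦄ (c₁ : G.Walk u u) (c₂ : G.Walk v v),
    c₁.IsCycle → c₂.IsCycle → ∀ e ∈ c₁.edges, e ∈ c₂.edges →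
      c₁.edges.toFinset = c₂.edges.toFinset

def IsCutVertex {V : Type*} (G : SimpleGraph V) (v : V) : Prop :=
  G.Connected ∧ ¬ (G.induce {u : V | u ≠ v}).Connected

/-!
With `x v = 1 / √(deg v)` one has `R(G) = ∑_{uv ∈ E} x u * x v` and `∑_v deg v * (x v)² = n`, so
`n - 2 R(G) = xᵀ L x` for the Laplacian `L = D - A` of `G`. As `L` is positive semidefinite,
`R(G) ≤ n / 2`; if `G` is regular then `x` is constant, hence in the kernel of `L`, and equality holds.
-/

open Matrix

namespace SimpleGraph

variable {V : Type*} [Fintype V] (G : SimpleGraph V) [DecidableRel G.Adj]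

theorem sum_dart_edge {M : Type*} [AddCommMonoid M] (F : Sym2 V → M) :
    ∑ d : G.Dart, F d.edge = 2 • ∑ e ∈ G.edgeFinset, F e := by
  classical
  rw [← sum_fiberwise_of_maps_to (t := G.edgeFinset) (g := Dart.edge)
    fun d _ ↦ mem_edgeFinset.2 d.edge_mem, smul_sum]
  refine sum_congr rfl fun e he ↦ ?_
  rw [sum_congr rfl fun d hd ↦ congrArg F (mem_filter.1 hd).2, sum_const,
    G.dart_edge_fiber_card e (mem_edgeFinset.1 he)]

theorem sum_dart_eq_sum_adj {M : Type*} [AddCommMonoid M] (f : V → V → M) :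
    ∑ d : G.Dart, f d.fst d.snd = ∑ u, ∑ v, if G.Adj u v then f u v else 0 := by
  let e : G.Dart ≃ {p : V × V // G.Adj p.1 p.2} :=
    ⟨fun d ↦ ⟨d.toProd, d.adj⟩, fun p ↦ ⟨p.1, p.2⟩, fun _ ↦ rfl, fun _ ↦ rfl⟩
  rw [← Fintype.sum_prod_type', ← sum_filter, sum_subtype _ fun _ ↦ mem_filter_univ _]
  exact Fintype.sum_equiv e _ _ fun _ ↦ rfl

theorem dotProduct_mulVec_lapMatrix {R : Type*} [CommRing R] (x : V → R) :
    x ⬝ᵥ (G.lapMatrix R *ᵥ x) = ∑ v, G.degree v * x v ^ 2 - ∑ d : G.Dart, x d.fst * x d.snd := by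
  rw [lapMatrix, sub_mulVec, dotProduct_sub, dotProduct_mulVec_degMatrix,
    dotProduct_mulVec_adjMatrix, G.sum_dart_eq_sum_adj fun u v ↦ x u * x v]
  simp only [sq, mul_assoc]

end SimpleGraph

section Randic

variable {V : Type*} [Fintype V] (G : SimpleGraph V)

noncomputable def invSqrtDegree (v : V) : ℝ := 1 / Real.sqrt (G.degree v)

theorem two_mul_randic :
    2 * randic G = ∑ d : G.Dart, invSqrtDegree G d.fst * invSqrtDegree G d.snd := by
  rw [randic, two_mul, ← two_nsmul, ← G.sum_dart_edge]
  refine sum_congr rfl fun d _ ↦ ?_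
  rw [invSqrtDegree, invSqrtDegree, one_div_mul_one_div, ← Real.sqrt_mul (Nat.cast_nonneg _)]
  rfl

theorem sum_degree_mul_invSqrtDegree_sq (h : ∀ v : V, 0 < G.degree v) :
    ∑ v, (G.degree v : ℝ) * invSqrtDegree G v ^ 2 = Fintype.card V := by
  rw [← nsmul_one, ← card_univ, ← sum_const]
  refine sum_congr rfl fun v _ ↦ ?_
  have hv : (0 : ℝ) < G.degree v := Nat.cast_pos.2 (h v)
  rw [invSqrtDegree, div_pow, Real.sq_sqrt hv.le]
  field_simp

theorem randic_eq_half_card_sub_lapMatrix (h : ∀ v : V, 0 < G.degree v) :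
    randic G = Fintype.card V / 2 -
      invSqrtDegree G ⬝ᵥ (G.lapMatrix ℝ *ᵥ invSqrtDegree G) / 2 := by
  rw [G.dotProduct_mulVec_lapMatrix, sum_degree_mul_invSqrtDegree_sq G h, ← two_mul_randic]
  ring

end Randic

theorem randic_le_half_card {V : Type*} [Fintype V] (G : SimpleGraph V)
    (h : ∀ v : V, 0 < G.degree v) :
    randic G ≤ (Fintype.card V : ℝ) / 2 ∧
    (∀ d : ℕ, 0 < d → G.IsRegularOfDegree d → randic G = (Fintype.card V : ℝ) / 2) := by
  rw [randic_eq_half_card_sub_lapMatrix G h]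
  refine ⟨?_, fun d _ hreg ↦ ?_⟩
  · have hpos := (posSemidef_lapMatrix ℝ G).dotProduct_mulVec_nonneg (invSqrtDegree G)
    rw [star_trivial] at hpos
    linarith
  · have hker : G.lapMatrix ℝ *ᵥ invSqrtDegree G = 0 :=
      (lapMatrix_mulVec_eq_zero_iff_forall_adj G).2 fun u v _ ↦ by
        simp only [invSqrtDegree, hreg u, hreg v]
    rw [hker, dotProduct_zero]
    ring
end

section
/- Let G be a graph, v a vertex of G, and form G+l by attaching a new pendant vertex adjacent to v. Then R(G+l) - R(G) ≥ √(d_v+1) - √(d_v), with equality if and only if every neighbor of v in G is a leaf. -/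
/-!
Attaching the pendant adds an edge of weight `1/√(d+1)` (with `d = d_v`) and changes only the
weights of the `d` edges `vw` at `v`, from `1/√(d d_w)` to `1/√((d+1) d_w)`, that is by `c/√d_w`
where `c = 1/√(d+1) - 1/√d < 0`. As `d_w ≥ 1`, each change is at least `c`, with equality exactly
when `d_w = 1`, and `1/√(d+1) + d c = √(d+1) - √d`.
-/

open SimpleGraph Finset
open scoped Classical

/-- Attach a new pendant vertex (the vertex `none`) adjacent to `v`. -/
def addPendant {V : Type*} (G : SimpleGraph V) (v : V) : SimpleGraph (Option V) :=
  SimpleGraph.fromRel fun a b =>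
    (∃ x y, a = some x ∧ b = some y ∧ G.Adj x y) ∨ (a = none ∧ b = some v)

theorem Real.sqrt_add_one_sub_sqrt (d : ℝ) :
    √(d + 1) - √d = 1 / √(d + 1) + d * (1 / √(d + 1) - 1 / √d) := by
  nth_rw 1 [← Real.div_sqrt (x := d + 1), ← Real.div_sqrt (x := d)]
  ring

theorem Real.one_div_sqrt_add_one_sub_one_div_sqrt_neg {d : ℝ} (hd : 0 < d) :
    1 / √(d + 1) - 1 / √d < 0 :=
  sub_neg.mpr <| one_div_lt_one_div_of_lt (Real.sqrt_pos.mpr hd) <|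
    Real.sqrt_lt_sqrt hd.le (lt_add_one d)

theorem Real.one_div_sqrt_mul_sub_one_div_sqrt_mul (a b : ℝ) {x : ℝ} (hx : 0 ≤ x) :
    1 / √(a * x) - 1 / √(b * x) = (1 / √a - 1 / √b) / √x := by
  rw [Real.sqrt_mul' a hx, Real.sqrt_mul' b hx, sub_div, div_div, div_div]

theorem Real.le_div_sqrt_of_nonpos {c x : ℝ} (hc : c ≤ 0) (hx : 1 ≤ x) : c ≤ c / √x := by
  have := div_le_self (neg_nonneg.mpr hc) (Real.one_le_sqrt.mpr hx)
  rw [neg_div] at this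
  linarith

theorem Real.div_sqrt_eq_self_iff {c x : ℝ} (hc : c ≠ 0) : c / √x = c ↔ x = 1 := by
  rw [div_eq_mul_inv, mul_eq_left₀ hc, inv_eq_one, Real.sqrt_eq_one]

namespace SimpleGraph

variable {V : Type*} [Fintype V] (G : SimpleGraph V)

theorem incidenceFinset_eq_image_neighborFinset (v : V) :
    G.incidenceFinset v = (G.neighborFinset v).image (s(v, ·)) := by
  ext e
  induction e with
  | _ x y =>
    simp only [mem_incidenceFinset, incidenceSet, Set.mem_ofPred_eq, mem_edgeSet, Sym2.mem_iff,
      mem_image, mem_neighborFinset, Sym2.eq_iff]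
    constructor
    · rintro ⟨hxy, rfl | rfl⟩
      · exact ⟨y, hxy, Or.inl ⟨rfl, rfl⟩⟩
      · exact ⟨x, hxy.symm, Or.inr ⟨rfl, rfl⟩⟩
    · rintro ⟨w, hvw, ⟨rfl, rfl⟩ | ⟨rfl, rfl⟩⟩
      exacts [⟨hvw, Or.inl rfl⟩, ⟨hvw.symm, Or.inr rfl⟩]

theorem sum_edgeFinset_sub_sum_edgeFinset {M : Type*} [AddCommGroup M] (v : V)
    {f g : Sym2 V → M} (hfg : ∀ e, v ∉ e → f e = g e) :
    ∑ e ∈ G.edgeFinset, f e - ∑ e ∈ G.edgeFinset, g e =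
      ∑ w ∈ G.neighborFinset v, (f s(v, w) - g s(v, w)) := by
  rw [← sum_sub_distrib, ← sum_filter_of_ne fun e _ hne => by_contra fun hv => hne <| by
    rw [hfg e hv, sub_self], ← incidenceFinset_eq_filter, incidenceFinset_eq_image_neighborFinset,
    sum_image fun _ _ _ _ h => Sym2.congr_right.mp h]

end SimpleGraph

section addPendant

variable {V : Type*} (G : SimpleGraph V) (v : V)

@[simp] theorem addPendant_adj_some_some {u w : V} :
    (addPendant G v).Adj (some u) (some w) ↔ G.Adj u w := by
  simp only [addPendant, SimpleGraph.fromRel_adj, ne_eq, Option.some.injEq, reduceCtorEq,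
    false_and, or_false, exists_and_left, exists_eq_left']
  exact ⟨fun ⟨_, h⟩ => h.elim id (·.symm), fun h => ⟨h.ne, Or.inl h⟩⟩

@[simp] theorem addPendant_adj_none_some {u : V} : (addPendant G v).Adj none (some u) ↔ u = v := by
  simp [addPendant, eq_comm]

@[simp] theorem addPendant_adj_some_none {u : V} : (addPendant G v).Adj (some u) none ↔ u = v := by
  rw [SimpleGraph.adj_comm, addPendant_adj_none_some]

variable [Fintype V]

theorem addPendant_degree_none : (addPendant G v).degree none = 1 := by
  rw [← card_neighborFinset_eq_degree, neighborFinset_eq_filter, card_filter, Fintype.sum_option]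
  simp

theorem addPendant_degree_some {u : V} :
    (addPendant G v).degree (some u) = G.degree u + if u = v then 1 else 0 := by
  rw [← card_neighborFinset_eq_degree, neighborFinset_eq_filter, card_filter, Fintype.sum_option,
    ← card_neighborFinset_eq_degree, neighborFinset_eq_filter, card_filter]
  simp [add_comm]

theorem addPendant_edgeFinset :
    (addPendant G v).edgeFinset =
      insert s(none, some v) (G.edgeFinset.map (Function.Embedding.some.sym2Map)) := by
  ext e
  induction e with
  | _ a b =>
    cases a <;> cases b <;> simp [eq_comm, Sym2.exists]
    exact ⟨fun h => ⟨_, _, h, .inl ⟨rfl, rfl⟩⟩,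
      by rintro ⟨x, y, h, ⟨rfl, rfl⟩ | ⟨rfl, rfl⟩⟩; exacts [h, h.symm]⟩

end addPendant

section randic

variable {V : Type*} [Fintype V] (G : SimpleGraph V)

noncomputable def randicWeight : Sym2 V → ℝ :=
  Sym2.lift ⟨fun u w => 1 / √((G.degree u : ℝ) * G.degree w), fun u w => by simp [mul_comm]⟩

@[simp] theorem randicWeight_mk (u w : V) :
    randicWeight G s(u, w) = 1 / √((G.degree u : ℝ) * G.degree w) := rfl

theorem randic_eq_sum_randicWeight : randic G = ∑ e ∈ G.edgeFinset, randicWeight G e := rfl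

theorem randic_addPendant_sub_randic (v : V) :
    randic (addPendant G v) - randic G =
      1 / √((G.degree v : ℝ) + 1) + ∑ w ∈ G.neighborFinset v,
        (1 / √(((G.degree v : ℝ) + 1) * G.degree w) - 1 / √((G.degree v : ℝ) * G.degree w)) := by
  have hdeg {u : V} (hu : u ≠ v) : (addPendant G v).degree (some u) = G.degree u := by
    simp [addPendant_degree_some, hu]
  have hnew : s(none, some v) ∉ G.edgeFinset.map Function.Embedding.some.sym2Map := by
    simp [Sym2.exists]
  rw [randic_eq_sum_randicWeight, randic_eq_sum_randicWeight, addPendant_edgeFinset,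
    sum_insert hnew, sum_map, add_sub_assoc, G.sum_edgeFinset_sub_sum_edgeFinset v]
  · congr 1
    · simp [addPendant_degree_none, addPendant_degree_some]
    · refine sum_congr rfl fun w hw => ?_
      have hwv : w ≠ v := (G.ne_of_adj ((G.mem_neighborFinset v w).mp hw)).symm
      simp [addPendant_degree_some, hdeg hwv]
  · intro e hv
    induction e with
    | _ x y =>
      rw [Sym2.mem_iff, not_or] at hv
      simp [hdeg (Ne.symm hv.1), hdeg (Ne.symm hv.2)]

end randic

theorem randic_addPendant {V : Type*} [Fintype V] (G : SimpleGraph V) (v : V) :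
    randic (addPendant G v) - randic G ≥
      Real.sqrt ((G.degree v : ℝ) + 1) - Real.sqrt (G.degree v) ∧
    (randic (addPendant G v) - randic G =
        Real.sqrt ((G.degree v : ℝ) + 1) - Real.sqrt (G.degree v) ↔
      ∀ w : V, G.Adj v w → G.degree w = 1) := by
  set d : ℝ := (G.degree v : ℝ)
  set c : ℝ := 1 / √(d + 1) - 1 / √d
  have hc {w : V} (hw : G.Adj v w) : c < 0 :=
    Real.one_div_sqrt_add_one_sub_one_div_sqrt_neg <| Nat.cast_pos.mpr <|
      G.degree_pos_iff_exists_adj v |>.mpr ⟨w, hw⟩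
  have hle : ∀ w ∈ G.neighborFinset v, c ≤ c / √(G.degree w) := fun w hw =>
    have hw := (G.mem_neighborFinset v w).mp hw
    Real.le_div_sqrt_of_nonpos (hc hw).le <| Nat.one_le_cast.mpr <|
      G.degree_pos_iff_exists_adj w |>.mpr ⟨v, hw.symm⟩
  have hsum : d * c = ∑ _w ∈ G.neighborFinset v, c := by
    rw [sum_const, card_neighborFinset_eq_degree, nsmul_eq_mul]
  rw [randic_addPendant_sub_randic, sum_congr rfl fun w _ =>
    Real.one_div_sqrt_mul_sub_one_div_sqrt_mul _ _ (Nat.cast_nonneg (G.degree w)),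
    Real.sqrt_add_one_sub_sqrt, hsum]
  refine ⟨add_le_add le_rfl (sum_le_sum hle), ?_⟩
  rw [add_right_inj, eq_comm, sum_eq_sum_iff_of_le hle]
  simp only [mem_neighborFinset]
  refine forall₂_congr fun w hw => ?_
  rw [eq_comm, Real.div_sqrt_eq_self_iff (hc hw).ne, Nat.cast_eq_one]
end

section
/- Let G be a cactus with n vertices, k cycles, and b bridges. Then the diameter d of G satisfies d ≤ (n + k + b - 1)/2. -/
open SimpleGraph Finset
open scoped Classical

/-!
Let `P` be a geodesic between two vertices at distance `d`. At most `b` of its edges are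
bridges. Every other edge of `P` lies on a cycle, and a geodesic traverses at most half of the
edges of any cycle, since two vertices of a closed walk of length `ℓ` are at distance `≤ ℓ / 2`. Since the cycles of a cactus are edge-disjoint, the non-bridge edges of `P`
are therefore at most as many as the edges off `P`, i.e. at most `m - d`, where
`m = n + k - 1` is the number of edges. Hence `d ≤ b + m - d`.
-/

namespace Finset

lemma card_biUnion_inter_le_card_sdiff {α : Type*} [DecidableEq α] {T : Finset (Finset α)}
    {P E : Finset α} (hT : (T : Set (Finset α)).PairwiseDisjoint id) (hTE : ∀ A ∈ T, A ⊆ E)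
    (hP : ∀ A ∈ T, #(A ∩ P) ≤ #(A \ P)) :
    #(T.biUnion id ∩ P) ≤ #(E \ P) :=
  calc #(T.biUnion id ∩ P) = #(T.biUnion (· ∩ P)) := by rw [biUnion_inter]; rfl
    _ ≤ ∑ A ∈ T, #(A ∩ P) := card_biUnion_le
    _ ≤ ∑ A ∈ T, #(A \ P) := sum_le_sum hP
    _ = #(T.biUnion (· \ P)) := (card_biUnion (hT.mono fun _ => sdiff_le)).symm
    _ ≤ #(E \ P) := card_le_card <| biUnion_subset.2 fun A hA => sdiff_subset_sdiff (hTE A hA) le_rfl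

end Finset

namespace SimpleGraph

variable {V : Type*} {G : SimpleGraph V}

namespace Walk

lemma two_mul_dist_le_length_of_mem_support {w a z : V} (c : G.Walk w w)
    (ha : a ∈ c.support) (hz : z ∈ c.support) : 2 * G.dist a z ≤ c.length := by
  set c' := c.rotate a ha
  have hz' : z ∈ c'.support := (c.mem_support_rotate_iff a ha).mpr hz
  have hsplit : (c'.takeUntil z hz').length + (c'.dropUntil z hz').length = c.length := by
    rw [← length_append, take_spec, length_rotate]
  have h₁ := dist_le (c'.takeUntil z hz')
  have h₂ := dist_le (c'.dropUntil z hz')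
  rw [dist_comm] at h₂
  omega

/-- The distance identity records that `a` and `z` lie on the geodesic `p`, in this order;
it is what lets the induction along `p` go through. -/
lemma card_edges_inter_eq_zero_or_exists_le_dist (hG : G.Connected) {w : V} (c : G.Walk w w) :
    ∀ {u v : V} (p : G.Walk u v), p.length = G.dist u v →
      #(p.edges.toFinset ∩ c.edges.toFinset) = 0 ∨
      ∃ a ∈ c.support, ∃ z ∈ c.support,
        G.dist u a + G.dist a z + G.dist z v = G.dist u v ∧
        #(p.edges.toFinset ∩ c.edges.toFinset) ≤ G.dist a z := by
  intro u v p
  induction p with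
  | nil => simp
  | @cons u x v hux p ih =>
    intro hp
    have hux₁ : G.dist u x = 1 := dist_eq_one_iff_adj.mpr hux
    have hp' : p.length = G.dist x v := by
      have := hG.dist_triangle (u := u) (v := x) (w := v)
      have := dist_le p
      rw [length_cons] at hp
      omega
    have hsum : G.dist u v = 1 + G.dist x v := by rw [← hp, length_cons, hp']; ring
    have hself : G.dist u u = 0 := dist_self
    simp only [edges_cons, List.toFinset_cons]
    by_cases he : s(u, x) ∈ c.edges
    · have hcard := card_insert_le s(u, x) (p.edges.toFinset ∩ c.edges.toFinset)
      rw [← insert_inter_of_mem (List.mem_toFinset.mpr he)] at hcard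
      have hu : u ∈ c.support := c.fst_mem_support_of_mem_edges he
      right
      rcases ih hp' with h₀ | ⟨a, -, z, hz, hdist, hle⟩
      · exact ⟨u, hu, x, c.snd_mem_support_of_mem_edges he, by omega, by omega⟩
      · have := hG.dist_triangle (u := x) (v := a) (w := z)
        have := hG.dist_triangle (u := x) (v := z) (w := v)
        have := hG.dist_triangle (u := u) (v := x) (w := z)
        have := hG.dist_triangle (u := u) (v := z) (w := v)
        exact ⟨u, hu, z, hz, by omega, by omega⟩
    · rw [insert_inter_of_notMem (mt List.mem_toFinset.mp he)]
      refine (ih hp').imp_right fun ⟨a, ha, z, hz, hdist, hle⟩ => ⟨a, ha, z, hz, ?_, hle⟩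
      have := hG.dist_triangle (u := u) (v := x) (w := a)
      have := hG.dist_triangle (u := u) (v := a) (w := v)
      have := hG.dist_triangle (u := a) (v := z) (w := v)
      omega

lemma two_mul_card_edges_inter_le_length (hG : G.Connected) {u v w : V} (p : G.Walk u v)
    (hp : p.length = G.dist u v) (c : G.Walk w w) :
    2 * #(p.edges.toFinset ∩ c.edges.toFinset) ≤ c.length := by
  rcases card_edges_inter_eq_zero_or_exists_le_dist hG c p hp with h₀ | ⟨a, ha, z, hz, -, hle⟩
  · omega
  · have := c.two_mul_dist_le_length_of_mem_support ha hz
    omega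

end Walk

noncomputable def cycleEdgeFinsets [Fintype V] (G : SimpleGraph V) : Finset (Finset (Sym2 V)) :=
  {s | ∃ (w : V) (c : G.Walk w w), c.IsCycle ∧ c.edges.toFinset = s}

lemma mem_cycleEdgeFinsets [Fintype V] {s : Finset (Sym2 V)} :
    s ∈ G.cycleEdgeFinsets ↔ ∃ (w : V) (c : G.Walk w w), c.IsCycle ∧ c.edges.toFinset = s := by
  simp [cycleEdgeFinsets]

lemma exists_mem_cycleEdgeFinsets_of_not_isBridge [Fintype V] {e : Sym2 V} (he : e ∈ G.edgeSet)
    (hb : ¬ G.IsBridge e) : ∃ s ∈ G.cycleEdgeFinsets, e ∈ s := by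
  rw [isBridge_iff_forall_cycle_notMem he] at hb
  push Not at hb
  obtain ⟨w, c, hc, hec⟩ := hb
  exact ⟨c.edges.toFinset, mem_cycleEdgeFinsets.mpr ⟨w, c, hc, rfl⟩,
    List.mem_toFinset.mpr hec⟩

lemma cycleEdgeFinsets_subset_edgeFinset [Fintype V] {s : Finset (Sym2 V)}
    (hs : s ∈ G.cycleEdgeFinsets) : s ⊆ G.edgeFinset := by
  obtain ⟨w, c, -, rfl⟩ := mem_cycleEdgeFinsets.mp hs
  intro e he
  exact mem_edgeFinset.mpr (c.edges_subset_edgeSet (List.mem_toFinset.mp he))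

lemma IsCactus.pairwiseDisjoint_cycleEdgeFinsets [Fintype V] (hG : IsCactus G) :
    (G.cycleEdgeFinsets : Set (Finset (Sym2 V))).PairwiseDisjoint id := by
  intro s hs t ht hst
  obtain ⟨w, c, hc, rfl⟩ := mem_cycleEdgeFinsets.mp hs
  obtain ⟨w', c', hc', rfl⟩ := mem_cycleEdgeFinsets.mp ht
  refine Finset.disjoint_left.mpr fun e he he' => hst ?_
  exact hG.2 c c' hc hc' e (List.mem_toFinset.mp he) (List.mem_toFinset.mp he')

lemma IsCactus.card_filter_not_isBridge_le [Fintype V] (hG : IsCactus G) {u v : V}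
    (p : G.Walk u v) (hp : p.length = G.dist u v) :
    #(p.edges.toFinset.filter (¬ G.IsBridge ·)) ≤ #(G.edgeFinset \ p.edges.toFinset) := by
  set P := p.edges.toFinset with hP
  have hcycles : P.filter (¬ G.IsBridge ·) ⊆ G.cycleEdgeFinsets.biUnion id ∩ P := by
    intro e he
    obtain ⟨heP, hnb⟩ := mem_filter.mp he
    obtain ⟨s, hs, hes⟩ := exists_mem_cycleEdgeFinsets_of_not_isBridge
      (p.edges_subset_edgeSet (List.mem_toFinset.mp heP)) hnb
    exact mem_inter.mpr ⟨mem_biUnion.mpr ⟨s, hs, hes⟩, heP⟩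
  have hhalf : ∀ s ∈ G.cycleEdgeFinsets, #(s ∩ P) ≤ #(s \ P) := by
    intro s hs
    obtain ⟨w, c, hc, rfl⟩ := mem_cycleEdgeFinsets.mp hs
    have hcard := card_inter_add_card_sdiff c.edges.toFinset P
    have := p.two_mul_card_edges_inter_le_length hG.1 hp c
    rw [List.toFinset_card_of_nodup hc.isTrail.edges_nodup, Walk.length_edges] at hcard
    rw [inter_comm, ← hP] at this
    omega
  exact (card_le_card hcycles).trans <| card_biUnion_inter_le_card_sdiff
    hG.pairwiseDisjoint_cycleEdgeFinsets (fun _ => cycleEdgeFinsets_subset_edgeFinset) hhalf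

lemma IsCactus.two_mul_dist_le [Fintype V] (hG : IsCactus G) (u v : V) :
    2 * G.dist u v ≤ #G.edgeFinset + Nat.card {e : Sym2 V // G.IsBridge e} := by
  obtain ⟨p, hp⟩ := hG.1.exists_walk_length_eq_dist u v
  have hnonbridges := hG.card_filter_not_isBridge_le p hp
  set P := p.edges.toFinset
  have hPcard : #P = G.dist u v := by
    rw [List.toFinset_card_of_nodup (p.isPath_of_length_eq_dist hp).isTrail.edges_nodup,
      Walk.length_edges, hp]
  have hPE : P ⊆ G.edgeFinset := fun e he =>
    mem_edgeFinset.mpr (p.edges_subset_edgeSet (List.mem_toFinset.mp he))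
  have hbridges : #(P.filter (G.IsBridge ·)) ≤ Nat.card {e : Sym2 V // G.IsBridge e} := by
    rw [Nat.card_eq_fintype_card, Fintype.card_subtype]
    exact card_le_card (filter_subset_filter _ (subset_univ P))
  rw [card_sdiff_of_subset hPE] at hnonbridges
  have hsplit := card_filter_add_card_filter_not (s := P) (G.IsBridge ·)
  have := card_le_card hPE
  omega

end SimpleGraph

lemma exists_dist_eq_graphDiam {V : Type*} [Fintype V] [Nonempty V] (G : SimpleGraph V) :
    ∃ u v, graphDiam G = G.dist u v := by
  obtain ⟨u, -, hu⟩ := exists_mem_eq_sup (univ : Finset V) univ_nonempty (ecc G)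
  obtain ⟨v, -, hv⟩ := exists_mem_eq_sup (univ : Finset V) univ_nonempty (G.dist u)
  exact ⟨u, v, by rw [graphDiam, hu, ecc, hv]⟩

theorem cactus_diam_le {V : Type*} [Fintype V] (G : SimpleGraph V) (hG : IsCactus G)
    (k b : ℕ) (hk : G.edgeFinset.card + 1 = Fintype.card V + k)
    (hb : b = Nat.card {e : Sym2 V // G.IsBridge e}) :
    (graphDiam G : ℝ) ≤ ((Fintype.card V : ℝ) + k + b - 1) / 2 := by
  have : Nonempty V := hG.1.nonempty
  obtain ⟨u, v, hdiam⟩ := exists_dist_eq_graphDiam G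
  have key : 2 * graphDiam G + 1 ≤ Fintype.card V + k + b := by
    have := hG.two_mul_dist_le u v
    omega
  rw [le_div_iff₀ two_pos]
  have := (Nat.cast_le (α := ℝ)).mpr key
  push_cast at this
  linarith
end

section
/- Let G be a tree. Then R(G) ≥ 1 + Σ_v (√(d_v) - 1), where the sum runs over all vertices, with equality if G is a star. -/
open SimpleGraph Finset
open scoped Classical

/-!
Write `a v = 1 / √(d v)`. Each edge `uv` contributes `a u * a v = (1 - a u) (1 - a v) + a u + a v - 1`
to `R`. Over all edges the terms `a u + a v` add up to `∑ v, d v * a v = ∑ v, √(d v)`, and in a tree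
the `-1`s add up to `1 - n`. What is left, `∑ (1 - a u) (1 - a v)`, is nonnegative because degrees
are at least `1`, and it vanishes on a star, where every edge has a leaf as an end and `a = 1` at a
leaf.
-/

open Real

theorem Real.one_sub_inv_sqrt_natCast_nonneg (n : ℕ) : 0 ≤ 1 - (√n)⁻¹ := by
  rcases n.eq_zero_or_pos with rfl | hn
  · simp
  · have : 1 ≤ √n := one_le_sqrt.2 (by exact_mod_cast hn)
    linarith [inv_le_one_of_one_le₀ this]

namespace SimpleGraph

variable {V : Type*} [Fintype V] (G : SimpleGraph V)

theorem sum_darts_fst {M : Type*} [AddCommMonoid M] (f : V → M) :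
    ∑ d : G.Dart, f d.fst = ∑ v, G.degree v • f v := by
  rw [← sum_fiberwise_of_maps_to (g := fun d : G.Dart ↦ d.fst) (t := univ) fun _ _ ↦ mem_univ _]
  refine sum_congr rfl fun v _ ↦ ?_
  rw [sum_congr rfl fun d hd ↦ congrArg f (mem_filter.1 hd).2, sum_const,
    G.dart_fst_fiber_card_eq_degree]

theorem sum_edgeFinset_lift_add {M : Type*} [AddCommMonoid M] (f : V → M) :
    ∑ e ∈ G.edgeFinset, Sym2.lift ⟨fun u v ↦ f u + f v, fun _ _ ↦ add_comm _ _⟩ e =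
      ∑ v, G.degree v • f v := by
  rw [← sum_darts_fst, ← sum_fiberwise_of_maps_to (g := fun d : G.Dart ↦ d.edge) (t := G.edgeFinset)
    fun d _ ↦ mem_edgeFinset.2 d.edge_mem]
  refine sum_congr rfl fun e he ↦ ?_
  induction e with
  | h u v =>
    let d : G.Dart := ⟨(u, v), mem_edgeFinset.1 he⟩
    have fiber : univ.filter (fun d' : G.Dart ↦ d'.edge = s(u, v)) = {d, d.symm} := d.edge_fiber
    rw [fiber, sum_pair d.symm_ne.symm]
    rfl

noncomputable def randicExcess : ℝ :=
  ∑ e ∈ G.edgeFinset, Sym2.lift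
    ⟨fun u v ↦ (1 - (√(G.degree u))⁻¹) * (1 - (√(G.degree v))⁻¹), fun _ _ ↦ mul_comm _ _⟩ e

theorem randic_eq_sum_sqrt_degree_sub_card_edgeFinset_add_randicExcess :
    randic G = ∑ v, √(G.degree v) - #G.edgeFinset + G.randicExcess := by
  let a : V → ℝ := fun v ↦ (√(G.degree v))⁻¹
  have edge_term : ∀ e : Sym2 V,
      Sym2.lift ⟨fun u v ↦ 1 / √((G.degree u : ℝ) * G.degree v), fun u v ↦ by simp [mul_comm]⟩ e =
        Sym2.lift ⟨fun u v ↦ a u + a v, fun _ _ ↦ add_comm _ _⟩ e - 1 +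
          Sym2.lift ⟨fun u v ↦ (1 - a u) * (1 - a v), fun _ _ ↦ mul_comm _ _⟩ e := by
    refine Sym2.ind fun u v ↦ ?_
    simp only [Sym2.lift_mk, a]
    rw [sqrt_mul (Nat.cast_nonneg _), one_div, mul_inv]
    ring
  have degree_smul : ∀ v, G.degree v • a v = √(G.degree v) := fun v ↦ by
    rw [nsmul_eq_mul, ← div_eq_mul_inv, div_sqrt]
  rw [randic, sum_congr rfl fun e _ ↦ edge_term e, sum_add_distrib, sum_sub_distrib,
    sum_edgeFinset_lift_add, sum_congr rfl fun v _ ↦ degree_smul v, sum_const, nsmul_one]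
  rfl

theorem randicExcess_nonneg : 0 ≤ G.randicExcess :=
  sum_nonneg fun e _ ↦ Sym2.ind (fun _ _ ↦ mul_nonneg (one_sub_inv_sqrt_natCast_nonneg _)
    (one_sub_inv_sqrt_natCast_nonneg _)) e

variable {G}

theorem IsAcyclic.degree_eq_one_of_forall_adj (hG : G.IsAcyclic) {w : V}
    (hw : ∀ u, u ≠ w → G.Adj w u) {x : V} (hx : x ≠ w) : G.degree x = 1 := by
  rw [degree_eq_one_iff_existsUnique_adj]
  refine ⟨w, (hw x hx).symm, fun y hxy ↦ by_contra fun hy ↦ ?_⟩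
  exact hG.cliqueFree le_rfl {w, x, y} (is3Clique_triple_iff.2 ⟨hw x hx, hw y hy, hxy⟩)

theorem IsAcyclic.randicExcess_eq_zero_of_forall_adj (hG : G.IsAcyclic) {w : V}
    (hw : ∀ u, u ≠ w → G.Adj w u) : G.randicExcess = 0 := by
  refine sum_eq_zero fun e he ↦ ?_
  induction e with
  | h u v =>
    have huv : G.Adj u v := mem_edgeFinset.1 he
    simp only [Sym2.lift_mk]
    obtain rfl | hu := eq_or_ne u w
    · simp [hG.degree_eq_one_of_forall_adj hw huv.ne.symm]
    · simp [hG.degree_eq_one_of_forall_adj hw hu]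

end SimpleGraph

theorem tree_randic_ge_valency_sum {V : Type*} [Fintype V] (G : SimpleGraph V)
    (hG : G.IsTree) :
    randic G ≥ 1 + ∑ v : V, (Real.sqrt (G.degree v) - 1) ∧
    ((∃ v : V, ∀ u : V, u ≠ v → G.Adj v u) →
      randic G = 1 + ∑ v : V, (Real.sqrt (G.degree v) - 1)) := by
  have card_edges : (#G.edgeFinset : ℝ) = Fintype.card V - 1 := by
    rw [← hG.card_edgeFinset]
    push_cast
    ring
  have randic_eq : randic G = 1 + ∑ v, (√(G.degree v) - 1) + G.randicExcess := by
    rw [G.randic_eq_sum_sqrt_degree_sub_card_edgeFinset_add_randicExcess, card_edges,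
      sum_sub_distrib, sum_const, card_univ, nsmul_one]
    ring
  refine ⟨?_, fun ⟨w, hw⟩ ↦ ?_⟩
  · linarith [G.randicExcess_nonneg]
  · rw [randic_eq, hG.isAcyclic.randicExcess_eq_zero_of_forall_adj hw, add_zero]
end

section
/- Let G be a tree on n ≥ 3 vertices. Then R(G) ≥ √(n-1), with equality only for the star on n vertices. (For n = 2, R = 1.) -/
/-!
With `m = n - 1`, convexity of `t ↦ t ^ (-1/2)` gives, for every edge `uv`,
`1 / √(d_u d_v) ≥ (3m - d_u d_v) / (2m√m)`. In a tree the neighbours of `v` have degree sum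
at most `m`, because their other neighbours are pairwise distinct and differ from `v` and its
neighbours. So the darts leaving `v` contribute at least `d_v / √m` to `2 R(G)`, and summing
over `v` with `∑ d_v = 2m` gives `R(G) ≥ √m`. If equality holds, every one of these vertex
bounds is tight; at a leaf with neighbour `w` this says `d_w = m`, so `w` is the centre of a star.
-/

open SimpleGraph Finset
open scoped Classical

/-- The convex function `t ↦ t ^ (-1/2)` lies above its tangent line at `a`. -/
theorem three_mul_sub_div_le_one_div_sqrt {a x : ℝ} (ha : 0 < a) (hx : 0 < x) :
    (3 * a - x) / (2 * a * √a) ≤ 1 / √x := by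
  obtain ⟨c, hc, rfl⟩ : ∃ c, 0 < c ∧ a = c ^ 2 :=
    ⟨√a, by positivity, (Real.sq_sqrt ha.le).symm⟩
  obtain ⟨s, hs, rfl⟩ : ∃ s, 0 < s ∧ x = s ^ 2 :=
    ⟨√x, by positivity, (Real.sq_sqrt hx.le).symm⟩
  rw [Real.sqrt_sq hc.le, Real.sqrt_sq hs.le, div_le_div_iff₀ (by positivity) hs]
  nlinarith [mul_nonneg (sq_nonneg (s - c)) (by positivity : 0 ≤ s + 2 * c)]

namespace SimpleGraph

variable {V : Type*} {G : SimpleGraph V}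

theorem IsAcyclic.eq_of_adj_of_adj (hG : G.IsAcyclic) {v w u₁ u₂ : V} (hvw : v ≠ w)
    (h₁ : G.Adj v u₁) (h₁' : G.Adj u₁ w) (h₂ : G.Adj v u₂) (h₂' : G.Adj u₂ w) :
    u₁ = u₂ := by
  have hpath {u : V} (h : G.Adj v u) (h' : G.Adj u w) :
      (Walk.cons h (Walk.cons h' .nil)).IsPath := by
    simp [Walk.isPath_def, h.ne, h'.ne, hvw]
  simpa using congrArg (fun p : G.Path v w => p.1.support)
    ((hG.subsingleton_path v w).elim ⟨_, hpath h₁ h₁'⟩ ⟨_, hpath h₂ h₂'⟩)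

variable [Fintype V]

theorem sum_dart_eq_sum_neighborFinset {M : Type*} [AddCommMonoid M] (f : V → V → M) :
    ∑ d : G.Dart, f d.fst d.snd = ∑ v, ∑ u ∈ G.neighborFinset v, f v u := by
  rw [← Finset.sum_sigma univ (fun v => G.neighborFinset v) (fun p => f p.1 p.2)]
  refine Finset.sum_bij' (fun d _ => ⟨d.fst, d.snd⟩)
    (fun p hp => ⟨(p.1, p.2), by simpa using hp⟩) ?_ ?_ ?_ ?_ ?_ <;> simp [Dart.adj]

theorem two_nsmul_sum_edgeFinset_lift {M : Type*} [AddCommMonoid M] (f : V → V → M)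
    (hf : ∀ u v, f u v = f v u) :
    2 • ∑ e ∈ G.edgeFinset, Sym2.lift ⟨f, hf⟩ e =
      ∑ v, ∑ u ∈ G.neighborFinset v, f v u := by
  rw [← sum_dart_eq_sum_neighborFinset, Finset.smul_sum,
    ← Finset.sum_fiberwise_of_maps_to (g := Dart.edge) (t := G.edgeFinset)
      (fun d _ => by simp [Dart.edge_mem])]
  refine Finset.sum_congr rfl fun e he => ?_
  induction e using Sym2.ind with
  | _ u v =>
    let d : G.Dart := ⟨(u, v), by simpa using he⟩
    rw [show s(u, v) = d.edge from rfl, Dart.edge_fiber d, Finset.sum_pair d.symm_ne.symm]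
    simp [d, hf v u, two_nsmul]

theorem IsAcyclic.sum_degree_neighborFinset_add_one_le (hG : G.IsAcyclic) (v : V) :
    ∑ u ∈ G.neighborFinset v, G.degree u + 1 ≤ Fintype.card V := by
  set N := G.neighborFinset v
  set T := N.biUnion fun u => (G.neighborFinset u).erase v
  have hdeg : ∀ u ∈ N, G.degree u = ((G.neighborFinset u).erase v).card + 1 := fun u hu => by
    rw [← card_neighborFinset_eq_degree, Finset.card_erase_add_one]
    simpa [N, adj_comm] using hu
  have hdisj : (N : Set V).PairwiseDisjoint fun u => (G.neighborFinset u).erase v := by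
    intro u₁ hu₁ u₂ hu₂ hne
    refine Finset.disjoint_left.mpr fun w hw₁ hw₂ => hne ?_
    simp only [N, Finset.mem_coe, mem_neighborFinset, Finset.mem_erase]
      at hu₁ hu₂ hw₁ hw₂
    exact hG.eq_of_adj_of_adj (Ne.symm hw₁.1) hu₁ hw₁.2 hu₂ hw₂.2
  have hT : Disjoint T (insert v N) := by
    refine Finset.disjoint_left.mpr fun w hwT hwN => ?_
    obtain ⟨u, hu, hw⟩ := Finset.mem_biUnion.mp hwT
    simp only [N, Finset.mem_insert, Finset.mem_erase, mem_neighborFinset] at hu hw hwN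
    obtain ⟨hwv, huw⟩ := hw
    rcases hwN with rfl | hvw
    · exact hwv rfl
    · exact hG.cliqueFree le_rfl {v, u, w} (is3Clique_triple_iff.mpr ⟨hu, hvw, huw⟩)
  have hcard := (Finset.card_union_of_disjoint hT).symm.trans_le (Finset.card_le_univ _)
  rw [Finset.card_insert_of_notMem (notMem_neighborFinset_self G v), card_neighborFinset_eq_degree,
    Finset.card_biUnion hdisj] at hcard
  rw [Finset.sum_congr rfl hdeg, Finset.sum_add_distrib, Finset.sum_const, smul_eq_mul, mul_one,
    card_neighborFinset_eq_degree]
  omega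

theorem IsTree.sum_degrees_eq_two_mul_card_sub_one (hG : G.IsTree) :
    ∑ v, (G.degree v : ℝ) = 2 * ((Fintype.card V : ℝ) - 1) := by
  have hE : (#G.edgeFinset : ℝ) + 1 = Fintype.card V := by exact_mod_cast hG.card_edgeFinset
  have hsum : (∑ v, G.degree v : ℝ) = 2 * #G.edgeFinset := by
    exact_mod_cast G.sum_degrees_eq_twice_card_edges
  linarith

theorem two_mul_randic : 2 * randic G =
    ∑ v, ∑ u ∈ G.neighborFinset v, 1 / √((G.degree v : ℝ) * G.degree u) := by
  rw [randic, ← two_nsmul_sum_edgeFinset_lift, nsmul_eq_mul, Nat.cast_ofNat]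

theorem degree_div_sqrt_le_sum_neighborFinset {m : ℝ} (hm : 0 < m) {v : V}
    (hv : ∑ u ∈ G.neighborFinset v, (G.degree u : ℝ) ≤ m) :
    G.degree v / √m ≤
      ∑ u ∈ G.neighborFinset v, 1 / √((G.degree v : ℝ) * G.degree u) := by
  have hterm : ∀ u ∈ G.neighborFinset v,
      (3 * m - G.degree v * G.degree u) / (2 * m * √m) ≤
        1 / √((G.degree v : ℝ) * G.degree u) :=
    fun u hu => by
      have hadj := (mem_neighborFinset G v u).mp hu
      have : 0 < G.degree v := G.degree_pos_iff_exists_adj v |>.mpr ⟨u, hadj⟩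
      have : 0 < G.degree u := G.degree_pos_iff_exists_adj u |>.mpr ⟨v, hadj.symm⟩
      exact three_mul_sub_div_le_one_div_sqrt hm (by positivity)
  refine le_trans ?_ (Finset.sum_le_sum hterm)
  have hsqrt : 0 < √m := Real.sqrt_pos.mpr hm
  rw [← Finset.sum_div, Finset.sum_sub_distrib, Finset.sum_const,
    ← Finset.mul_sum (G.neighborFinset v) (fun u => (G.degree u : ℝ)),
    card_neighborFinset_eq_degree, nsmul_eq_mul, le_div_iff₀ (by positivity)]
  have hdv : (0 : ℝ) ≤ G.degree v := by positivity
  calc G.degree v / √m * (2 * m * √m) = 2 * m * G.degree v := by field_simp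
    _ ≤ _ := by nlinarith

theorem sum_degree_div_sqrt_le_two_mul_randic {m : ℝ} (hm : 0 < m)
    (hs : ∀ v, ∑ u ∈ G.neighborFinset v, (G.degree u : ℝ) ≤ m) :
    ∑ v, G.degree v / √m ≤ 2 * randic G :=
  two_mul_randic (G := G) ▸
    Finset.sum_le_sum fun _ _ => degree_div_sqrt_le_sum_neighborFinset hm (hs _)

theorem degree_eq_of_two_mul_randic_eq {m : ℝ} (hm : 0 < m)
    (hs : ∀ v, ∑ u ∈ G.neighborFinset v, (G.degree u : ℝ) ≤ m)
    (heq : ∑ v, G.degree v / √m = 2 * randic G) {u w : V} (hu : G.neighborFinset u = {w}) :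
    (G.degree w : ℝ) = m := by
  rw [two_mul_randic] at heq
  have hu' := (Finset.sum_eq_sum_iff_of_le fun _ _ =>
    degree_div_sqrt_le_sum_neighborFinset hm (hs _)).mp heq u (Finset.mem_univ u)
  have hdeg : G.degree u = 1 := by rw [← card_neighborFinset_eq_degree, hu, Finset.card_singleton]
  rw [hu, Finset.sum_singleton, hdeg, Nat.cast_one, one_mul, one_div, one_div, inv_inj,
    Real.sqrt_inj hm.le (Nat.cast_nonneg _)] at hu'
  exact hu'.symm

end SimpleGraph

theorem tree_randic_ge_sqrt {V : Type*} [Fintype V] (G : SimpleGraph V)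
    (hG : G.IsTree) (hn : 3 ≤ Fintype.card V) :
    Real.sqrt ((Fintype.card V : ℝ) - 1) ≤ randic G ∧
    (randic G = Real.sqrt ((Fintype.card V : ℝ) - 1) →
      ∃ v : V, ∀ u : V, u ≠ v → G.Adj v u) := by
  set m : ℝ := (Fintype.card V : ℝ) - 1
  have hm : 0 < m := by
    have : (3 : ℝ) ≤ Fintype.card V := by exact_mod_cast hn
    linarith
  have hs (v : V) : ∑ u ∈ G.neighborFinset v, (G.degree u : ℝ) ≤ m := by
    rw [le_sub_iff_add_le]
    exact_mod_cast hG.isAcyclic.sum_degree_neighborFinset_add_one_le v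
  have hsum : ∑ v, (G.degree v : ℝ) / √m = 2 * √m := by
    rw [← Finset.sum_div, hG.sum_degrees_eq_two_mul_card_sub_one, mul_div_assoc, Real.div_sqrt]
  refine ⟨?_, fun heq => ?_⟩
  · linarith [G.sum_degree_div_sqrt_le_two_mul_randic hm hs]
  · have : Nontrivial V := Fintype.one_lt_card_iff_nontrivial.mp (by omega)
    obtain ⟨u, hu⟩ := hG.exists_vert_degree_one_of_nontrivial
    obtain ⟨w, hw⟩ := Finset.card_eq_one.mp ((G.card_neighborFinset_eq_degree u).trans hu)
    have hdeg := G.degree_eq_of_two_mul_randic_eq hm hs (by rw [hsum, heq]) hw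
    have : G.degree w = Fintype.card V - 1 := by
      rw [← Nat.cast_inj (R := ℝ), Nat.cast_sub (by omega), hdeg, Nat.cast_one]
    exact ⟨w, fun x hx => (G.degree_eq_card_sub_one w).mp this hx.symm⟩
end
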